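/- With the action and coaction of Proposition 3.3 (h·a = (S(h₁)α⁻¹(a))α(h₂), ρ(h) = α(h₁₂)⊗S(h₁₁)α⁻¹(h₂)), condition (a) holds: for all h,a ∈ H, Δ(h·a) = Σ α(h₁_(0))·a₁ ⊗ α(h₁_(1))(α⁻¹(h₂)·α⁻¹(a₂)). -/

import Mathlib

open TensorProduct LinearMap

/-- A unital monoidal Hom-associative algebra. -/
structure HomAlg (k : Type*) [Field k] (A : Type*) [AddCommGroup A] [Module k A] where
  au : A ≃ₗ[k] A
  mul : A →ₗ[k] A →ₗ[k] A
  one : A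
  hom_assoc : ∀ x y z : A, mul (au x) (mul y z) = mul (mul x y) (au z)
  one_mul' : ∀ x : A, mul one x = au x
  mul_one' : ∀ x : A, mul x one = au x
  au_mul : ∀ x y : A, au (mul x y) = mul (au x) (au y)
  au_one : au one = one

/-- A counital monoidal Hom-coassociative coalgebra. -/
structure HomCoalg (k : Type*) [Field k] (C : Type*) [AddCommGroup C] [Module k C] where
  au : C ≃ₗ[k] C
  comul : C →ₗ[k] C ⊗[k] C
  counit : C →ₗ[k] k
  hom_coassoc : (TensorProduct.map au.symm.toLinearMap comul) ∘ₗ comul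
    = (TensorProduct.assoc k C C C).toLinearMap ∘ₗ (TensorProduct.map comul au.symm.toLinearMap) ∘ₗ comul
  counit_comul : ∀ c : C,
    (TensorProduct.lid k C) ((TensorProduct.map counit LinearMap.id) (comul c)) = au.symm c
  comul_counit : ∀ c : C,
    (TensorProduct.rid k C) ((TensorProduct.map LinearMap.id counit) (comul c)) = au.symm c
  comul_au : ∀ c : C, comul (au c) = (TensorProduct.map au.toLinearMap au.toLinearMap) (comul c)
  counit_au : ∀ c : C, counit (au c) = counit c

/-- A monoidal Hom-bialgebra. -/
structure HomBialg (k : Type*) [Field k] (H : Type*) [AddCommGroup H] [Module k H]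
    extends HomAlg k H, HomCoalg k H where
  comul_mul : ∀ x y : H, comul (mul x y)
    = (TensorProduct.map (TensorProduct.lift mul) (TensorProduct.lift mul))
        ((TensorProduct.tensorTensorTensorComm k H H H H) (comul x ⊗ₜ[k] comul y))
  comul_one : comul one = one ⊗ₜ[k] one
  counit_mul : ∀ x y : H, counit (mul x y) = counit x * counit y
  counit_one : counit one = 1

/-- A monoidal Hom-Hopf algebra. -/
structure HomHopf (k : Type*) [Field k] (H : Type*) [AddCommGroup H] [Module k H]
    extends HomBialg k H where
  S : H →ₗ[k] H
  S_au : S ∘ₗ au.toLinearMap = au.toLinearMap ∘ₗ S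
  S_mul_id : ∀ x : H,
    TensorProduct.lift mul ((TensorProduct.map S LinearMap.id) (comul x)) = counit x • one
  id_mul_S : ∀ x : H,
    TensorProduct.lift mul ((TensorProduct.map LinearMap.id S) (comul x)) = counit x • one

/-- The Hom-smash coproduct comultiplication on `B ⊗ H`:
`Δ(a # h) = Σ a₁ # α(h₁₍₀₎) ⊗ β⁻¹(a₂)·h₁₍₁₎ # h₂`. -/
noncomputable def smashComul {k : Type*} [Field k] {B H : Type*}
    [AddCommGroup B] [Module k B] [AddCommGroup H] [Module k H]
    (βB : B ≃ₗ[k] B) (mulB : B →ₗ[k] B →ₗ[k] B) (comulB : B →ₗ[k] B ⊗[k] B)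
    (αH : H ≃ₗ[k] H) (comulH : H →ₗ[k] H ⊗[k] H) (ρ : H →ₗ[k] H ⊗[k] B) :
    B ⊗[k] H →ₗ[k] (B ⊗[k] H) ⊗[k] (B ⊗[k] H) :=
  (TensorProduct.map
      (LinearMap.lTensor B αH.toLinearMap)
      ((LinearMap.rTensor H (TensorProduct.lift (mulB ∘ₗ βB.symm.toLinearMap)))
        ∘ₗ (TensorProduct.assoc k B B H).symm.toLinearMap))
  ∘ₗ (TensorProduct.tensorTensorTensorComm k B B H (B ⊗[k] H)).toLinearMap
  ∘ₗ (LinearMap.lTensor (B ⊗[k] B)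
        ((TensorProduct.assoc k H B H).toLinearMap ∘ₗ (LinearMap.rTensor H ρ)))
  ∘ₗ (TensorProduct.map comulB comulH)

/-- The Hom-smash counit `ε(a # h) = ε_B(a) ε_H(h)` on `B ⊗ H`. -/
noncomputable def smashCounit {k : Type*} [Field k] {B H : Type*}
    [AddCommGroup B] [Module k B] [AddCommGroup H] [Module k H]
    (counitB : B →ₗ[k] k) (counitH : H →ₗ[k] k) : B ⊗[k] H →ₗ[k] k :=
  (LinearMap.mul' k k) ∘ₗ (TensorProduct.map counitB counitH)

section Bicross

variable {k : Type*} [Field k] {B H : Type*}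
  [AddCommGroup B] [Module k B] [AddCommGroup H] [Module k H]

/-- The Hom-smash product multiplication on `B ⊗ H` (as a map on the tensor square):
`(a # h)(b # g) = Σ a(h₁ · β⁻¹(b)) # α(h₂)g`. -/
noncomputable def smashMulT
    (βB : B ≃ₗ[k] B) (mulB : B →ₗ[k] B →ₗ[k] B)
    (αH : H ≃ₗ[k] H) (mulH : H →ₗ[k] H →ₗ[k] H) (comulH : H →ₗ[k] H ⊗[k] H)
    (act : H →ₗ[k] B →ₗ[k] B) :
    (B ⊗[k] H) ⊗[k] (B ⊗[k] H) →ₗ[k] B ⊗[k] H :=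
  (TensorProduct.map
      ((TensorProduct.lift mulB)
        ∘ₗ (LinearMap.lTensor B ((TensorProduct.lift act) ∘ₗ (LinearMap.lTensor H βB.symm.toLinearMap)))
        ∘ₗ (TensorProduct.assoc k B H B).toLinearMap)
      (TensorProduct.lift (mulH ∘ₗ αH.toLinearMap)))
  ∘ₗ (TensorProduct.tensorTensorTensorComm k (B ⊗[k] H) H B H).toLinearMap
  ∘ₗ (LinearMap.rTensor (B ⊗[k] H)
        ((TensorProduct.assoc k B H H).symm.toLinearMap ∘ₗ (LinearMap.lTensor B comulH)))

/-- Bicrossproduct condition (a):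
`Δ_B(h·b) = Σ α(h₁₍₀₎)·b₁ ⊗ β(h₁₍₁₎)(α⁻¹(h₂)·β⁻¹(b₂))`. -/
noncomputable def bicrossCondA
    (βB : B ≃ₗ[k] B) (mulB : B →ₗ[k] B →ₗ[k] B) (comulB : B →ₗ[k] B ⊗[k] B)
    (αH : H ≃ₗ[k] H) (comulH : H →ₗ[k] H ⊗[k] H)
    (act : H →ₗ[k] B →ₗ[k] B) (ρ : H →ₗ[k] H ⊗[k] B) : Prop :=
  ∀ (h : H) (b : B), comulB (act h b)
    = ((LinearMap.lTensor B (TensorProduct.lift mulB))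
        ∘ₗ (TensorProduct.assoc k B B B).toLinearMap
        ∘ₗ (TensorProduct.map
             ((TensorProduct.map (TensorProduct.lift (act ∘ₗ αH.toLinearMap)) βB.toLinearMap)
               ∘ₗ (TensorProduct.assoc k H B B).symm.toLinearMap
               ∘ₗ (LinearMap.lTensor H (TensorProduct.comm k B B).toLinearMap)
               ∘ₗ (TensorProduct.assoc k H B B).toLinearMap
               ∘ₗ (LinearMap.rTensor B ρ))
             ((TensorProduct.lift act)
               ∘ₗ (TensorProduct.map αH.symm.toLinearMap βB.symm.toLinearMap)))
        ∘ₗ (TensorProduct.tensorTensorTensorComm k H H B B).toLinearMap)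
      (comulH h ⊗ₜ[k] comulB b)

/-- Bicrossproduct condition (d):
`Σ h₂₍₀₎ ⊗ (h₁·b)β²(h₂₍₁₎) = Σ h₁₍₀₎ ⊗ β²(h₁₍₁₎)(h₂·b)`. -/
noncomputable def bicrossCondD
    (βB : B ≃ₗ[k] B) (mulB : B →ₗ[k] B →ₗ[k] B)
    (αH : H ≃ₗ[k] H) (comulH : H →ₗ[k] H ⊗[k] H)
    (act : H →ₗ[k] B →ₗ[k] B) (ρ : H →ₗ[k] H ⊗[k] B) : Prop :=
  ∀ (h : H) (b : B),
    ((LinearMap.lTensor H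
        ((TensorProduct.lift (mulB ∘ₗ act.flip b))
          ∘ₗ (LinearMap.lTensor H (βB.toLinearMap ∘ₗ βB.toLinearMap))))
      ∘ₗ (TensorProduct.assoc k H H B).toLinearMap
      ∘ₗ (LinearMap.rTensor B (TensorProduct.comm k H H).toLinearMap)
      ∘ₗ (TensorProduct.assoc k H H B).symm.toLinearMap
      ∘ₗ (LinearMap.lTensor H ρ)) (comulH h)
    = ((LinearMap.lTensor H
          ((TensorProduct.lift (mulB ∘ₗ (βB.toLinearMap ∘ₗ βB.toLinearMap)))
            ∘ₗ (LinearMap.lTensor B (act.flip b))))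
        ∘ₗ (TensorProduct.assoc k H B H).toLinearMap
        ∘ₗ (LinearMap.rTensor H ρ)) (comulH h)

/-- Bicrossproduct condition (e):
`ρ(hg) = Σ α(h₁₍₀₎)g₍₀₎ ⊗ β(h₁₍₁₎)(α⁻¹(h₂)·β⁻¹(g₍₁₎))`.
The multiplications of `H` used on the two sides are passed separately (`mulH'`, `mulH`),
so that the same formula covers the opposite-algebra case. -/
noncomputable def bicrossCondE
    (βB : B ≃ₗ[k] B) (mulB : B →ₗ[k] B →ₗ[k] B)
    (αH : H ≃ₗ[k] H) (mulH : H →ₗ[k] H →ₗ[k] H) (comulH : H →ₗ[k] H ⊗[k] H)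
    (act : H →ₗ[k] B →ₗ[k] B) (ρ : H →ₗ[k] H ⊗[k] B) : Prop :=
  ∀ (h g : H), ρ (mulH h g)
    = ((LinearMap.lTensor H (TensorProduct.lift mulB))
        ∘ₗ (TensorProduct.assoc k H B B).toLinearMap
        ∘ₗ (TensorProduct.map
              ((TensorProduct.map (TensorProduct.lift (mulH ∘ₗ αH.toLinearMap)) βB.toLinearMap)
                ∘ₗ (TensorProduct.assoc k H H B).symm.toLinearMap
                ∘ₗ (LinearMap.lTensor H (TensorProduct.comm k B H).toLinearMap)
                ∘ₗ (TensorProduct.assoc k H B H).toLinearMap)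
              ((TensorProduct.lift act)
                ∘ₗ (TensorProduct.map αH.symm.toLinearMap βB.symm.toLinearMap)))
        ∘ₗ (TensorProduct.tensorTensorTensorComm k (H ⊗[k] B) H H B).toLinearMap
        ∘ₗ (LinearMap.rTensor (H ⊗[k] B) (LinearMap.rTensor H ρ)))
      (comulH h ⊗ₜ[k] ρ g)

end Bicross
section Adjoint

variable {k : Type*} [Field k] {H : Type*} [AddCommGroup H] [Module k H]

/-- The action `h · a = Σ (S(h₁)α⁻¹(a))α(h₂)` of `H^op` on `H` (tensor form). -/
noncomputable def adActT (αH : H ≃ₗ[k] H) (mul : H →ₗ[k] H →ₗ[k] H)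
    (comul : H →ₗ[k] H ⊗[k] H) (S : H →ₗ[k] H) : H ⊗[k] H →ₗ[k] H :=
  (TensorProduct.lift mul)
  ∘ₗ (TensorProduct.map
        ((TensorProduct.lift (mul ∘ₗ S)) ∘ₗ (LinearMap.lTensor H αH.symm.toLinearMap))
        αH.toLinearMap)
  ∘ₗ (TensorProduct.assoc k H H H).symm.toLinearMap
  ∘ₗ (LinearMap.lTensor H (TensorProduct.comm k H H).toLinearMap)
  ∘ₗ (TensorProduct.assoc k H H H).toLinearMap
  ∘ₗ (LinearMap.rTensor H comul)

/-- The action `h · a = Σ (S(h₁)α⁻¹(a))α(h₂)` of `H^op` on `H` (curried form). -/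
noncomputable def adAct (αH : H ≃ₗ[k] H) (mul : H →ₗ[k] H →ₗ[k] H)
    (comul : H →ₗ[k] H ⊗[k] H) (S : H →ₗ[k] H) : H →ₗ[k] H →ₗ[k] H :=
  TensorProduct.curry (adActT αH mul comul S)

/-- The coaction `ρ(h) = Σ α(h₁₂) ⊗ S(h₁₁)α⁻¹(h₂)` of `H` on `H^op`. -/
noncomputable def adCoact (αH : H ≃ₗ[k] H) (mul : H →ₗ[k] H →ₗ[k] H)
    (comul : H →ₗ[k] H ⊗[k] H) (S : H →ₗ[k] H) : H →ₗ[k] H ⊗[k] H :=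
  (TensorProduct.map αH.toLinearMap
      ((TensorProduct.lift (mul ∘ₗ S)) ∘ₗ (LinearMap.lTensor H αH.symm.toLinearMap)))
  ∘ₗ (TensorProduct.assoc k H H H).toLinearMap
  ∘ₗ (LinearMap.rTensor H (TensorProduct.comm k H H).toLinearMap)
  ∘ₗ (LinearMap.rTensor H comul)
  ∘ₗ comul

end Adjoint

/-!
Write the action as a sandwich, `h·b = Σ (S(h₁)·α⁻¹b)·α(h₂)`. Since `Δ` is multiplicative and `S`
is anti-comultiplicative (the convolution argument in `Hom(H, H ⊗ H)`), `Δ(h·b)` is the same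
sandwich in `H ⊗ H` of `Δ(α⁻¹b)` between `Δ(S h₁)` and `Δ(α h₂)`, and by Hom-coassociativity it
equals `Σ α(h₁₂)·b₁ ⊗ (S(h₁₁)α⁻¹b₂)h₂`. On the right-hand side of (a), the legs `h₁₂` and `h₂₁` of
`Σ α(h₁₍₀₎) ⊗ α(h₁₍₁₎)(α⁻¹(h₂)·c)` become adjacent after reassociating, meet as `h₁₂ S(h₂₁)` and
are absorbed by the antipode and counit axioms, leaving `Σ α(h₁₂) ⊗ (S(h₁₁)c)h₂`; with
`c = α⁻¹b₂` the two sides agree.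
-/

namespace HomAlg

variable {k : Type*} [Field k] {A B V : Type*} [AddCommGroup A] [Module k A]
  [AddCommGroup B] [Module k B] [AddCommGroup V] [Module k V] (Aa : HomAlg k A) (Bb : HomAlg k B)

lemma au_symm_mul (x y : A) :
    Aa.au.symm (Aa.mul x y) = Aa.mul (Aa.au.symm x) (Aa.au.symm y) := by
  rw [LinearEquiv.symm_apply_eq, Aa.au_mul]; simp

@[simp] lemma au_symm_one : Aa.au.symm Aa.one = Aa.one := by
  rw [LinearEquiv.symm_apply_eq, Aa.au_one]

lemma mul_mul_mul_mul (x y z c w : A) :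
    Aa.mul (Aa.mul x y) (Aa.mul (Aa.mul z c) w) =
      Aa.mul (Aa.au x) (Aa.mul (Aa.mul (Aa.au.symm (Aa.au.symm (Aa.mul y (Aa.au z)))) c) w) := by
  have h₁ := Aa.hom_assoc x y (Aa.au.symm (Aa.mul (Aa.mul z c) w))
  have h₂ := Aa.hom_assoc (Aa.au.symm y) (Aa.mul (Aa.au.symm z) (Aa.au.symm c)) (Aa.au.symm w)
  have h₃ := Aa.hom_assoc (Aa.au.symm (Aa.au.symm y)) (Aa.au.symm z) (Aa.au.symm c)
  simp only [LinearEquiv.apply_symm_apply] at h₁ h₂ h₃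
  rw [← h₁, au_symm_mul, au_symm_mul, h₂, h₃]
  simp only [au_symm_mul, LinearEquiv.symm_apply_apply]

noncomputable def tensorMul : (A ⊗[k] B) ⊗[k] (A ⊗[k] B) →ₗ[k] A ⊗[k] B :=
  map (lift Aa.mul) (lift Bb.mul) ∘ₗ (tensorTensorTensorComm k A B A B).toLinearMap

@[simp] lemma tensorMul_tmul (a a' : A) (b b' : B) :
    tensorMul Aa Bb ((a ⊗ₜ b) ⊗ₜ (a' ⊗ₜ b')) = Aa.mul a a' ⊗ₜ Bb.mul b b' := rfl

noncomputable def tensor : HomAlg k (A ⊗[k] B) where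
  au := TensorProduct.congr Aa.au Bb.au
  mul := TensorProduct.curry (tensorMul Aa Bb)
  one := Aa.one ⊗ₜ Bb.one
  hom_assoc x y z := by
    induction x using TensorProduct.induction_on with
    | zero => simp
    | add x x' hx hx' => simp only [map_add, LinearMap.add_apply, hx, hx']
    | tmul a b =>
      induction y using TensorProduct.induction_on with
      | zero => simp
      | add y y' hy hy' => simp only [map_add, LinearMap.add_apply, hy, hy']
      | tmul a' b' =>
        induction z using TensorProduct.induction_on with
        | zero => simp
        | add z z' hz hz' => simp only [map_add, hz, hz']
        | tmul a'' b'' => simp [Aa.hom_assoc, Bb.hom_assoc]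
  one_mul' x := by
    induction x using TensorProduct.induction_on with
    | zero => simp
    | add x x' hx hx' => simp only [map_add, hx, hx']
    | tmul a b => simp [Aa.one_mul', Bb.one_mul']
  mul_one' x := by
    induction x using TensorProduct.induction_on with
    | zero => simp
    | add x x' hx hx' => simp only [map_add, LinearMap.add_apply, hx, hx']
    | tmul a b => simp [Aa.mul_one', Bb.mul_one']
  au_mul x y := by
    induction x using TensorProduct.induction_on with
    | zero => simp
    | add x x' hx hx' => simp only [map_add, LinearMap.add_apply, hx, hx']
    | tmul a b =>
      induction y using TensorProduct.induction_on with
      | zero => simp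
      | add y y' hy hy' => simp only [map_add, hy, hy']
      | tmul a' b' => simp [Aa.au_mul, Bb.au_mul]
  au_one := by simp [Aa.au_one, Bb.au_one]

@[simp] lemma tensor_au (t : A ⊗[k] B) :
    (tensor Aa Bb).au t = map Aa.au.toLinearMap Bb.au.toLinearMap t := rfl

@[simp] lemma tensor_mul (u v : A ⊗[k] B) :
    (tensor Aa Bb).mul u v = tensorMul Aa Bb (u ⊗ₜ v) := rfl

@[simp] lemma tensor_one : (tensor Aa Bb).one = Aa.one ⊗ₜ Bb.one := rfl

@[simp] lemma lift_tensor_mul : lift (tensor Aa Bb).mul = tensorMul Aa Bb :=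
  lift_mk_compr₂ _

noncomputable def sandwich (σ τ : V →ₗ[k] A) : A →ₗ[k] V ⊗[k] V →ₗ[k] A where
  toFun a := lift ((Aa.mul ∘ₗ Aa.mul.flip a ∘ₗ σ).compl₂ τ)
  map_add' a b := by ext x y; simp
  map_smul' c a := by ext x y; simp

@[simp] lemma sandwich_tmul (σ τ : V →ₗ[k] A) (a : A) (x y : V) :
    Aa.sandwich σ τ a (x ⊗ₜ y) = Aa.mul (Aa.mul (σ x) a) (τ y) := rfl

end HomAlg

namespace HomCoalg

variable {k : Type*} [Field k] {C : Type*} [AddCommGroup C] [Module k C] (Cc : HomCoalg k C)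

lemma comul_au_symm (x : C) :
    Cc.comul (Cc.au.symm x) =
      map Cc.au.symm.toLinearMap Cc.au.symm.toLinearMap (Cc.comul x) := by
  conv_rhs => rw [← Cc.au.apply_symm_apply x, Cc.comul_au, map_map]
  simp

lemma comul_comp_au :
    Cc.comul ∘ₗ Cc.au.toLinearMap = map Cc.au.toLinearMap Cc.au.toLinearMap ∘ₗ Cc.comul :=
  LinearMap.ext Cc.comul_au

lemma lTensor_comul_comul (x : C) :
    lTensor C Cc.comul (Cc.comul x) = rTensor _ Cc.au.toLinearMap
      (TensorProduct.assoc k C C C (lTensor _ Cc.au.symm.toLinearMap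
        (rTensor C Cc.comul (Cc.comul x)))) := by
  have h := LinearMap.congr_fun Cc.hom_coassoc x
  simp only [LinearMap.comp_apply, LinearEquiv.coe_coe] at h
  rw [← rTensor_comp_lTensor, ← lTensor_comp_rTensor, comp_apply, comp_apply] at h
  rw [← h, ← rTensor_comp_apply]
  simp

section Coassoc

variable {M N P Q : Type*} [AddCommGroup M] [Module k M] [AddCommGroup N] [Module k N]
  [AddCommGroup P] [Module k P] [AddCommGroup Q] [Module k Q]

theorem map_map_rTensor_comul (f : C →ₗ[k] M) (g : C →ₗ[k] N) (l : C →ₗ[k] P) (x : C) :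
    map (map f g) l (rTensor C Cc.comul (Cc.comul x)) =
      (TensorProduct.assoc k M N P).symm (map (f ∘ₗ Cc.au.symm.toLinearMap)
        (map g (l ∘ₗ Cc.au.toLinearMap)) (lTensor C Cc.comul (Cc.comul x))) := by
  rw [lTensor_comul_comul]
  generalize rTensor C Cc.comul (Cc.comul x) = t
  induction t using TensorProduct.induction_on with
  | zero => simp
  | add s t hs ht => simp only [map_add, hs, ht]
  | tmul u z =>
    induction u using TensorProduct.induction_on with
    | zero => simp
    | add s t hs ht => simp only [add_tmul, map_add, hs, ht]
    | tmul a b => simp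

theorem map_map_lTensor_comul (f : C →ₗ[k] M) (g : C →ₗ[k] N) (l : C →ₗ[k] P) (x : C) :
    map f (map g l) (lTensor C Cc.comul (Cc.comul x)) =
      TensorProduct.assoc k M N P (map (map (f ∘ₗ Cc.au.toLinearMap) g)
        (l ∘ₗ Cc.au.symm.toLinearMap) (rTensor C Cc.comul (Cc.comul x))) := by
  rw [map_map_rTensor_comul]
  simp [comp_assoc]

/-- `Σ f₁(x₁₁) ⊗ f₂(x₁₂) ⊗ f₃(x₂₁) ⊗ f₄(x₂₂) = Σ f₁(α⁻¹x₁) ⊗ f₂(αx₂₁₁) ⊗ f₃(αx₂₁₂) ⊗ f₄(x₂₂)`. -/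
theorem map_map_map_comul_comul (f₁ : C →ₗ[k] M) (f₂ : C →ₗ[k] N) (f₃ : C →ₗ[k] P)
    (f₄ : C →ₗ[k] Q) (x : C) :
    map (map f₁ f₂) (map f₃ f₄) (map Cc.comul Cc.comul (Cc.comul x)) =
      (TensorProduct.assoc k M N (P ⊗[k] Q)).symm (map (f₁ ∘ₗ Cc.au.symm.toLinearMap)
        (TensorProduct.assoc k N P Q ∘ₗ
          map (map (f₂ ∘ₗ Cc.au.toLinearMap) (f₃ ∘ₗ Cc.au.toLinearMap)) f₄)
        (lTensor C (rTensor C Cc.comul) (lTensor C Cc.comul (Cc.comul x)))) := by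
  have hB : map (map f₁ f₂) (map f₃ f₄) (map Cc.comul Cc.comul (Cc.comul x)) =
      map (map f₁ f₂) (map f₃ f₄ ∘ₗ Cc.comul) (rTensor C Cc.comul (Cc.comul x)) := by
    simp only [rTensor, map_map, comp_id]
  rw [hB, map_map_rTensor_comul]
  simp only [lTensor, map_map, comp_id]
  congr 3
  refine LinearMap.ext fun y => ?_
  have hL : map f₂ ((map f₃ f₄ ∘ₗ Cc.comul) ∘ₗ Cc.au.toLinearMap) (Cc.comul y) =
      map f₂ (map (f₃ ∘ₗ Cc.au.toLinearMap) (f₄ ∘ₗ Cc.au.toLinearMap))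
        (lTensor C Cc.comul (Cc.comul y)) := by
    rw [comp_assoc, comul_comp_au, lTensor, map_map, ← comp_assoc, ← map_comp, comp_id]
  simp only [comp_apply, LinearEquiv.coe_coe]
  rw [hL, map_map_lTensor_comul]
  simp [comp_assoc, rTensor]

end Coassoc

section Convolution

variable {A : Type*} [AddCommGroup A] [Module k A] (Aa : HomAlg k A)

noncomputable def conv (f g : C →ₗ[k] A) : C →ₗ[k] A := lift Aa.mul ∘ₗ map f g ∘ₗ Cc.comul

noncomputable def convOne : C →ₗ[k] A := toSpanSingleton k A Aa.one ∘ₗ Cc.counit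

theorem convOne_conv {g : C →ₗ[k] A} (hg : ∀ x, g (Cc.au x) = Aa.au (g x)) :
    conv Cc Aa (convOne Cc Aa) g = g := by
  have h : ∀ t, map (convOne Cc Aa) g t =
      Aa.one ⊗ₜ g (TensorProduct.lid k C (map Cc.counit id t)) := by
    intro t
    induction t using TensorProduct.induction_on with
    | zero => simp
    | add s t hs ht => simp only [map_add, tmul_add, hs, ht]
    | tmul a b => simp [convOne, smul_tmul]
  ext x
  rw [conv, comp_apply, comp_apply, h, Cc.counit_comul, lift.tmul, Aa.one_mul', ← hg,
    LinearEquiv.apply_symm_apply]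

theorem conv_convOne {f : C →ₗ[k] A} (hf : ∀ x, f (Cc.au x) = Aa.au (f x)) :
    conv Cc Aa f (convOne Cc Aa) = f := by
  have h : ∀ t, map f (convOne Cc Aa) t =
      f (TensorProduct.rid k C (map id Cc.counit t)) ⊗ₜ Aa.one := by
    intro t
    induction t using TensorProduct.induction_on with
    | zero => simp
    | add s t hs ht => simp only [map_add, add_tmul, hs, ht]
    | tmul a b => simp [convOne, smul_tmul']
  ext x
  rw [conv, comp_apply, comp_apply, h, Cc.comul_counit, lift.tmul, Aa.mul_one', ← hf,
    LinearEquiv.apply_symm_apply]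

theorem conv_assoc {f g l : C →ₗ[k] A} (hf : ∀ x, f (Cc.au x) = Aa.au (f x))
    (hl : ∀ x, l (Cc.au x) = Aa.au (l x)) :
    conv Cc Aa (conv Cc Aa f g) l = conv Cc Aa f (conv Cc Aa g l) := by
  ext x
  have hL : conv Cc Aa (conv Cc Aa f g) l x = lift Aa.mul
      (rTensor A (lift Aa.mul) (map (map f g) l (rTensor C Cc.comul (Cc.comul x)))) := by
    simp only [conv, comp_apply, rTensor, map_map, comp_id, id_comp]
  have hR : conv Cc Aa f (conv Cc Aa g l) x = lift Aa.mul
      (lTensor A (lift Aa.mul) (map f (map g l) (lTensor C Cc.comul (Cc.comul x)))) := by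
    simp only [conv, comp_apply, lTensor, map_map, comp_id, id_comp]
  rw [hL, hR, map_map_rTensor_comul]
  generalize lTensor C Cc.comul (Cc.comul x) = t
  induction t using TensorProduct.induction_on with
  | zero => simp
  | add s t hs ht => simp only [map_add, hs, ht]
  | tmul a u =>
    induction u using TensorProduct.induction_on with
    | zero => simp
    | add s t hs ht => simp only [tmul_add, map_add, hs, ht]
    | tmul b c =>
      simp only [map_tmul, comp_apply, LinearEquiv.coe_coe, assoc_symm_tmul, rTensor_tmul,
        lTensor_tmul, lift.tmul, hl, ← Aa.hom_assoc, ← hf, LinearEquiv.apply_symm_apply]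

end Convolution

end HomCoalg

namespace HomHopf

variable {k : Type*} [Field k] {H : Type*} [AddCommGroup H] [Module k H] (Hh : HomHopf k H)

lemma S_au_apply (x : H) : Hh.S (Hh.au x) = Hh.au (Hh.S x) := LinearMap.congr_fun Hh.S_au x

lemma S_au_symm_apply (x : H) : Hh.S (Hh.au.symm x) = Hh.au.symm (Hh.S x) := by
  rw [LinearEquiv.eq_symm_apply, ← S_au_apply, LinearEquiv.apply_symm_apply]

theorem rTensor_rTensor_comul_of_comul_eq_counit {F : H ⊗[k] H →ₗ[k] H}
    (hF : ∀ x, F (Hh.comul x) = Hh.counit x • Hh.one) (y : H) :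
    rTensor H F (rTensor H Hh.comul (Hh.comul y)) = Hh.one ⊗ₜ Hh.au.symm y := by
  have hF' : F ∘ₗ Hh.comul = toSpanSingleton k H Hh.one ∘ₗ Hh.counit := LinearMap.ext hF
  rw [← rTensor_comp_apply, hF', ← Hh.counit_comul y]
  generalize Hh.comul y = t
  induction t using TensorProduct.induction_on with
  | zero => simp
  | add s t hs ht => simp only [map_add, tmul_add, hs, ht]
  | tmul a b => simp [smul_tmul]

/-- `Σ f₁(x₁₁) ⊗ F(x₁₂ ⊗ x₂₁) ⊗ f₄(x₂₂) = Σ f₁(α⁻¹x₁) ⊗ 1 ⊗ f₄(α⁻¹x₂)` for `F = μ ∘ (S ⊗ id)` or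
`F = μ ∘ (id ⊗ S)`. -/
theorem middle_contraction {M Q : Type*} [AddCommGroup M] [Module k M] [AddCommGroup Q]
    [Module k Q] {F : H ⊗[k] H →ₗ[k] H} (hF : ∀ x, F (Hh.comul x) = Hh.counit x • Hh.one)
    (hFα : ∀ x y, F (Hh.au x ⊗ₜ Hh.au y) = Hh.au (F (x ⊗ₜ y))) (f₁ : H →ₗ[k] M)
    (f₄ : H →ₗ[k] Q) (x : H) :
    lTensor M (rTensor Q F) (lTensor M (TensorProduct.assoc k H H Q).symm
      (TensorProduct.assoc k M H (H ⊗[k] Q)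
        (map (map f₁ id) (map id f₄) (map Hh.comul Hh.comul (Hh.comul x))))) =
      map (f₁ ∘ₗ Hh.au.symm.toLinearMap)
        (TensorProduct.mk k H Q Hh.one ∘ₗ f₄ ∘ₗ Hh.au.symm.toLinearMap) (Hh.comul x) := by
  have hFα' : F ∘ₗ map Hh.au.toLinearMap Hh.au.toLinearMap = Hh.au.toLinearMap ∘ₗ F :=
    TensorProduct.ext' hFα
  rw [Hh.toHomCoalg.map_map_map_comul_comul, LinearEquiv.apply_symm_apply]
  simp only [lTensor, map_map, comp_id]
  congr 2
  refine LinearMap.ext fun y => ?_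
  simp only [id_comp, comp_apply, LinearEquiv.coe_coe, LinearEquiv.symm_apply_apply]
  rw [rTensor, map_map, hFα', id_comp, ← comp_id f₄, map_comp, comp_apply, ← rTensor,
    rTensor_rTensor_comul_of_comul_eq_counit Hh hF]
  simp [Hh.au_one]

lemma comul_lift_mul (t : H ⊗[k] H) :
    Hh.comul (lift Hh.mul t) =
      HomAlg.tensorMul Hh.toHomAlg Hh.toHomAlg (map Hh.comul Hh.comul t) := by
  induction t using TensorProduct.induction_on with
  | zero => simp
  | add s t hs ht => simp only [map_add, hs, ht]
  | tmul a b => exact Hh.comul_mul a b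

theorem conv_comul_comul_comp_S :
    Hh.toHomCoalg.conv (Hh.toHomAlg.tensor Hh.toHomAlg) Hh.comul (Hh.comul ∘ₗ Hh.S) =
      Hh.toHomCoalg.convOne (Hh.toHomAlg.tensor Hh.toHomAlg) := by
  refine LinearMap.ext fun x => ?_
  have h : map Hh.comul (Hh.comul ∘ₗ Hh.S) (Hh.comul x) =
      map Hh.comul Hh.comul (map id Hh.S (Hh.comul x)) := by
    rw [map_map, comp_id]
  simp only [HomCoalg.conv, HomCoalg.convOne, comp_apply, HomAlg.lift_tensor_mul]
  rw [h, ← comul_lift_mul, Hh.id_mul_S, map_smul, Hh.comul_one]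
  simp

theorem conv_comm_map_S_S_comul :
    Hh.toHomCoalg.conv (Hh.toHomAlg.tensor Hh.toHomAlg)
        ((TensorProduct.comm k H H).toLinearMap ∘ₗ map Hh.S Hh.S ∘ₗ Hh.comul) Hh.comul =
      Hh.toHomCoalg.convOne (Hh.toHomAlg.tensor Hh.toHomAlg) := by
  refine LinearMap.ext fun x => ?_
  set F : H ⊗[k] H →ₗ[k] H := lift Hh.mul ∘ₗ map Hh.S id
  set Ψ : H ⊗[k] (H ⊗[k] H) →ₗ[k] H ⊗[k] H :=
    lTensor H F ∘ₗ (TensorProduct.leftComm k H H H).toLinearMap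
  have hΨ : HomAlg.tensorMul Hh.toHomAlg Hh.toHomAlg
      ∘ₗ map ((TensorProduct.comm k H H).toLinearMap ∘ₗ map Hh.S Hh.S) id =
      Ψ ∘ₗ lTensor H (rTensor H F) ∘ₗ lTensor H (TensorProduct.assoc k H H H).symm.toLinearMap
        ∘ₗ (TensorProduct.assoc k H H (H ⊗[k] H)).toLinearMap := by
    ext a b c d
    simp [F, Ψ]
  have hmid := Hh.middle_contraction (F := F) Hh.S_mul_id
    (fun a b => by simp [F, S_au_apply, Hh.au_mul]) id id x
  simp only [map_id, id_coe, id_eq] at hmid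
  have hfin : ∀ t, Ψ (map (id ∘ₗ Hh.au.symm.toLinearMap)
      (TensorProduct.mk k H H Hh.one ∘ₗ id ∘ₗ Hh.au.symm.toLinearMap) t) =
      Hh.one ⊗ₜ Hh.au.symm (lift Hh.mul (map Hh.S id t)) := by
    intro t
    induction t using TensorProduct.induction_on with
    | zero => simp
    | add s t hs ht => simp only [map_add, tmul_add, hs, ht]
    | tmul a b => simp [F, Ψ, S_au_symm_apply, HomAlg.au_symm_mul]
  calc _ = HomAlg.tensorMul Hh.toHomAlg Hh.toHomAlg
        (map ((TensorProduct.comm k H H).toLinearMap ∘ₗ map Hh.S Hh.S) id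
          (map Hh.comul Hh.comul (Hh.comul x))) := by
        simp only [HomCoalg.conv, comp_apply, HomAlg.lift_tensor_mul, map_map, id_comp, comp_assoc]
    _ = Hh.one ⊗ₜ Hh.au.symm (Hh.counit x • Hh.one) := by
        rw [← comp_apply (f := HomAlg.tensorMul _ _), hΨ]
        simp only [comp_apply, LinearEquiv.coe_coe]
        rw [hmid, hfin, Hh.S_mul_id]
    _ = _ := by simp [HomCoalg.convOne, tmul_smul]

theorem comul_comp_S :
    Hh.comul ∘ₗ Hh.S = (TensorProduct.comm k H H).toLinearMap ∘ₗ map Hh.S Hh.S ∘ₗ Hh.comul := by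
  set T := Hh.toHomAlg.tensor Hh.toHomAlg
  set S₂ := (TensorProduct.comm k H H).toLinearMap ∘ₗ map Hh.S Hh.S ∘ₗ Hh.comul
  have hΔS : ∀ x, (Hh.comul ∘ₗ Hh.S) (Hh.au x) = T.au ((Hh.comul ∘ₗ Hh.S) x) := by
    intro x
    simp [T, S_au_apply, Hh.comul_au]
  have hS₂ : ∀ x, S₂ (Hh.au x) = T.au (S₂ x) := by
    intro x
    simp only [S₂, T, comp_apply, HomAlg.tensor_au, Hh.comul_au]
    induction Hh.comul x using TensorProduct.induction_on with
    | zero => simp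
    | add s t hs ht => simp only [map_add, hs, ht]
    | tmul a b => simp [S_au_apply]
  calc Hh.comul ∘ₗ Hh.S = Hh.toHomCoalg.conv T (Hh.toHomCoalg.convOne T) (Hh.comul ∘ₗ Hh.S) :=
        (Hh.toHomCoalg.convOne_conv T hΔS).symm
    _ = Hh.toHomCoalg.conv T (Hh.toHomCoalg.conv T S₂ Hh.comul) (Hh.comul ∘ₗ Hh.S) := by
        rw [conv_comm_map_S_S_comul]
    _ = Hh.toHomCoalg.conv T S₂ (Hh.toHomCoalg.conv T Hh.comul (Hh.comul ∘ₗ Hh.S)) :=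
        Hh.toHomCoalg.conv_assoc T hS₂ hΔS
    _ = Hh.toHomCoalg.conv T S₂ (Hh.toHomCoalg.convOne T) := by rw [conv_comul_comul_comp_S]
    _ = S₂ := Hh.toHomCoalg.conv_convOne T hS₂

/-- `coactWith φ h = Σ α(h₁₂) ⊗ φ(h₁₁ ⊗ h₂)`; the coaction `ρ` is the case
`φ(x ⊗ y) = S(x)α⁻¹(y)`. -/
noncomputable def coactWith (φ : H ⊗[k] H →ₗ[k] H) : H →ₗ[k] H ⊗[k] H :=
  map Hh.au.toLinearMap φ ∘ₗ (TensorProduct.assoc k H H H).toLinearMap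
    ∘ₗ rTensor H (TensorProduct.comm k H H).toLinearMap ∘ₗ rTensor H Hh.comul ∘ₗ Hh.comul

lemma adCoact_eq :
    adCoact Hh.au Hh.mul Hh.comul Hh.S =
      Hh.coactWith (lift (Hh.mul ∘ₗ Hh.S) ∘ₗ lTensor H Hh.au.symm.toLinearMap) := rfl

lemma adAct_apply (h b : H) :
    adAct Hh.au Hh.mul Hh.comul Hh.S h b =
      Hh.sandwich Hh.S Hh.au (Hh.au.symm b) (Hh.comul h) := by
  rw [adAct, TensorProduct.curry_apply, adActT]
  simp only [comp_apply, rTensor_tmul, LinearEquiv.coe_coe]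
  induction Hh.comul h using TensorProduct.induction_on with
  | zero => simp
  | add s t hs ht => simp only [map_add, add_tmul, hs, ht]
  | tmul x y => simp

lemma comul_adAct (h b : H) :
    Hh.comul (adAct Hh.au Hh.mul Hh.comul Hh.S h b) =
      (Hh.toHomAlg.tensor Hh.toHomAlg).sandwich (Hh.comul ∘ₗ Hh.S)
        (Hh.comul ∘ₗ Hh.au.toLinearMap) (Hh.comul (Hh.au.symm b)) (Hh.comul h) := by
  rw [adAct_apply]
  induction Hh.comul h using TensorProduct.induction_on with
  | zero => simp
  | add s t hs ht => simp only [map_add, hs, ht]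
  | tmul x y =>
    simp only [HomAlg.sandwich_tmul, comp_apply]
    rw [Hh.comul_mul, Hh.comul_mul]
    rfl

lemma tensor_sandwich_tmul_apply (a c : H) (t : H ⊗[k] H) :
    (Hh.toHomAlg.tensor Hh.toHomAlg).sandwich (Hh.comul ∘ₗ Hh.S)
        (Hh.comul ∘ₗ Hh.au.toLinearMap) (a ⊗ₜ c) t =
      map (Hh.sandwich Hh.S Hh.au a) (Hh.sandwich Hh.S Hh.au c)
        (tensorTensorTensorComm k H H H H (rTensor (H ⊗[k] H)
          (TensorProduct.comm k H H).toLinearMap (map Hh.comul Hh.comul t))) := by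
  induction t using TensorProduct.induction_on with
  | zero => simp
  | add s t hs ht => simp only [map_add, hs, ht]
  | tmul x y =>
    simp only [HomAlg.sandwich_tmul, comp_apply, map_tmul, HomAlg.tensor_mul, LinearEquiv.coe_coe]
    rw [← comp_apply (f := Hh.comul), comul_comp_S, Hh.comul_au]
    simp only [comp_apply, LinearEquiv.coe_coe]
    induction Hh.comul x using TensorProduct.induction_on with
    | zero => simp
    | add s t hs ht => simp only [map_add, add_tmul, hs, ht]
    | tmul x₁ x₂ =>
      induction Hh.comul y using TensorProduct.induction_on with
      | zero => simp
      | add s t hs ht => simp only [map_add, tmul_add, hs, ht]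
      | tmul y₁ y₂ => simp

lemma rTensor_adAct_flip_map (a : H) (φ : H ⊗[k] H →ₗ[k] H) (t : (H ⊗[k] H) ⊗[k] H) :
    rTensor H ((adAct Hh.au Hh.mul Hh.comul Hh.S).flip (Hh.au a))
        (map Hh.au.toLinearMap φ
          (TensorProduct.assoc k H H H (rTensor H (TensorProduct.comm k H H).toLinearMap t))) =
      map (Hh.sandwich Hh.S Hh.au a ∘ₗ map Hh.au.toLinearMap Hh.au.toLinearMap) φ
        (TensorProduct.assoc k (H ⊗[k] H) H H
          (rTensor H (TensorProduct.comm k H (H ⊗[k] H)).toLinearMap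
            (map (lTensor H Hh.comul) id t))) := by
  induction t using TensorProduct.induction_on with
  | zero => simp
  | add s t hs ht => simp only [map_add, hs, ht]
  | tmul u z =>
    induction u using TensorProduct.induction_on with
    | zero => simp
    | add s t hs ht => simp only [map_add, add_tmul, hs, ht]
    | tmul x y => simp [adAct_apply, Hh.comul_au]

/-- `Σ Δ(S h₁)(a ⊗ c)Δ(α h₂) = Σ α(h₁₂)·α(a) ⊗ (S(h₁₁)c)h₂`. -/
theorem tensor_sandwich_tmul_comul (a c h : H) :
    (Hh.toHomAlg.tensor Hh.toHomAlg).sandwich (Hh.comul ∘ₗ Hh.S)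
        (Hh.comul ∘ₗ Hh.au.toLinearMap) (a ⊗ₜ c) (Hh.comul h) =
      rTensor H ((adAct Hh.au Hh.mul Hh.comul Hh.S).flip (Hh.au a))
        (Hh.coactWith (Hh.sandwich Hh.S id c) h) := by
  -- Both sides are brought to `Ω` evaluated on `M = Σ h₁ ⊗ ((h₂₁₁ ⊗ h₂₁₂) ⊗ h₂₂)`.
  set Ω : H ⊗[k] ((H ⊗[k] H) ⊗[k] H) →ₗ[k] H ⊗[k] H :=
    map (Hh.sandwich Hh.S Hh.au a ∘ₗ map Hh.au.toLinearMap Hh.au.toLinearMap)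
      (Hh.sandwich Hh.S Hh.au c ∘ₗ rTensor H Hh.au.symm.toLinearMap)
      ∘ₗ (TensorProduct.leftComm k H (H ⊗[k] H) H).toLinearMap
  set M := lTensor H (rTensor H Hh.comul) (lTensor H Hh.comul (Hh.comul h))
  have hL : map (Hh.sandwich Hh.S Hh.au a) (Hh.sandwich Hh.S Hh.au c)
      (tensorTensorTensorComm k H H H H (rTensor (H ⊗[k] H) (TensorProduct.comm k H H).toLinearMap
        (map Hh.comul Hh.comul (Hh.comul h)))) = Ω M := by
    have hB := Hh.toHomCoalg.map_map_map_comul_comul id id id id h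
    simp only [map_id, id_coe, id_eq, id_comp] at hB
    rw [hB]
    refine LinearMap.congr_fun (?_ : map (Hh.sandwich Hh.S Hh.au a) (Hh.sandwich Hh.S Hh.au c)
      ∘ₗ (tensorTensorTensorComm k H H H H).toLinearMap
      ∘ₗ rTensor (H ⊗[k] H) (TensorProduct.comm k H H).toLinearMap
      ∘ₗ (TensorProduct.assoc k H H (H ⊗[k] H)).symm.toLinearMap
      ∘ₗ map Hh.au.symm.toLinearMap ((TensorProduct.assoc k H H H).toLinearMap
        ∘ₗ map (map Hh.au.toLinearMap Hh.au.toLinearMap) id) = Ω) M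
    ext x y₁ y₂ z
    simp [Ω]
  have hR : map (Hh.sandwich Hh.S Hh.au a ∘ₗ map Hh.au.toLinearMap Hh.au.toLinearMap)
      (Hh.sandwich Hh.S id c) (TensorProduct.assoc k (H ⊗[k] H) H H
        (rTensor H (TensorProduct.comm k H (H ⊗[k] H)).toLinearMap
          (map (lTensor H Hh.comul) id (rTensor H Hh.comul (Hh.comul h))))) = Ω M := by
    have hM : map (id ∘ₗ Hh.au.symm.toLinearMap) (map Hh.comul (id ∘ₗ Hh.au.toLinearMap))
        (lTensor H Hh.comul (Hh.comul h)) =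
        map Hh.au.symm.toLinearMap (map id Hh.au.toLinearMap) M := by
      simp only [M, lTensor, rTensor, map_map, id_comp, comp_id, ← comp_assoc, ← map_comp]
    rw [lTensor, Hh.toHomCoalg.map_map_rTensor_comul, hM]
    refine LinearMap.congr_fun (?_ : map (Hh.sandwich Hh.S Hh.au a ∘ₗ
        map Hh.au.toLinearMap Hh.au.toLinearMap) (Hh.sandwich Hh.S id c)
      ∘ₗ (TensorProduct.assoc k (H ⊗[k] H) H H).toLinearMap
      ∘ₗ rTensor H (TensorProduct.comm k H (H ⊗[k] H)).toLinearMap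
      ∘ₗ (TensorProduct.assoc k H (H ⊗[k] H) H).symm.toLinearMap
      ∘ₗ map Hh.au.symm.toLinearMap (map id Hh.au.toLinearMap) = Ω) M
    ext x y₁ y₂ z
    simp [Ω]
  rw [tensor_sandwich_tmul_apply, hL, ← hR, coactWith]
  simp only [comp_apply, LinearEquiv.coe_coe]
  exact (rTensor_adAct_flip_map Hh a _ _).symm


/-- The legs `h₁₂` and `h₂₁` of `Σ α(h₁₍₀₎) ⊗ α(h₁₍₁₎)(α⁻¹(h₂)·c)` enter only through
`h₁₂ S(h₂₁)`. -/
lemma coact_mul_act_eq_contract (c : H) (t : H ⊗[k] H) :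
    lTensor H (lift Hh.mul) (TensorProduct.assoc k H H H
      (map (map Hh.au.toLinearMap Hh.au.toLinearMap ∘ₗ adCoact Hh.au Hh.mul Hh.comul Hh.S)
        ((adAct Hh.au Hh.mul Hh.comul Hh.S).flip c ∘ₗ Hh.au.symm.toLinearMap) t)) =
      (map (Hh.au.toLinearMap ∘ₗ Hh.au.toLinearMap)
        (lift ((Hh.mul ∘ₗ Hh.S ∘ₗ Hh.au.toLinearMap ∘ₗ Hh.au.toLinearMap).compl₂
          (Hh.sandwich (Hh.au.symm.toLinearMap ∘ₗ Hh.au.symm.toLinearMap) id (Hh.au.symm c))))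
        ∘ₗ (TensorProduct.assoc k H H (H ⊗[k] H)).toLinearMap
        ∘ₗ rTensor (H ⊗[k] H) (TensorProduct.comm k H H).toLinearMap)
      (lTensor (H ⊗[k] H) (rTensor H (lift Hh.mul ∘ₗ map id Hh.S))
        (lTensor (H ⊗[k] H) (TensorProduct.assoc k H H H).symm
          (TensorProduct.assoc k (H ⊗[k] H) H (H ⊗[k] H)
            (map (map Hh.comul id) (map id id) (map Hh.comul Hh.comul t))))) := by
  induction t using TensorProduct.induction_on with
  | zero => simp
  | add s t hs ht => simp only [map_add, hs, ht]
  | tmul x y =>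
    simp only [map_tmul, comp_apply, flip_apply, adAct_apply, Hh.toHomCoalg.comul_au_symm,
      adCoact_eq, coactWith, LinearEquiv.coe_coe, map_id, id_coe, id_eq]
    rw [show map Hh.comul id (Hh.comul x) = rTensor H Hh.comul (Hh.comul x) from rfl]
    generalize rTensor H Hh.comul (Hh.comul x) = u
    induction Hh.comul y using TensorProduct.induction_on with
    | zero => simp
    | add s t hs ht => simp only [map_add, tmul_add, hs, ht]
    | tmul y₁ y₂ =>
      induction u using TensorProduct.induction_on with
      | zero => simp
      | add s t hs ht => simp only [map_add, add_tmul, hs, ht]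
      | tmul u x₂ =>
        induction u using TensorProduct.induction_on with
        | zero => simp
        | add s t hs ht => simp only [map_add, add_tmul, hs, ht]
        | tmul x₁ x₁' =>
          simp only [map_tmul, lTensor_tmul, rTensor_tmul, assoc_tmul, assoc_symm_tmul,
            comm_tmul, comp_apply, LinearEquiv.coe_coe, lift.tmul, id_coe, id_eq,
            HomAlg.sandwich_tmul, compl₂_apply]
          rw [Hh.au_mul, LinearEquiv.apply_symm_apply, Hh.toHomAlg.mul_mul_mul_mul,
            S_au_symm_apply, LinearEquiv.apply_symm_apply, ← S_au_apply, ← S_au_apply,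
            LinearEquiv.apply_symm_apply]

/-- `Σ α(h₁₍₀₎) ⊗ α(h₁₍₁₎)(α⁻¹(h₂)·c) = Σ α(h₁₂) ⊗ (S(h₁₁)c)h₂`. -/
theorem coact_mul_act (c h : H) :
    lTensor H (lift Hh.mul) (TensorProduct.assoc k H H H
      (map (map Hh.au.toLinearMap Hh.au.toLinearMap ∘ₗ adCoact Hh.au Hh.mul Hh.comul Hh.S)
        ((adAct Hh.au Hh.mul Hh.comul Hh.S).flip c ∘ₗ Hh.au.symm.toLinearMap) (Hh.comul h))) =
      Hh.coactWith (Hh.sandwich Hh.S id c) h := by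
  rw [coact_mul_act_eq_contract, Hh.middle_contraction Hh.id_mul_S
    (fun a b => by simp [S_au_apply, Hh.au_mul])]
  simp only [coactWith, comp_apply, LinearEquiv.coe_coe]
  induction Hh.comul h using TensorProduct.induction_on with
  | zero => simp
  | add s t hs ht => simp only [map_add, hs, ht]
  | tmul x y =>
    simp only [map_tmul, rTensor_tmul, comp_apply, LinearEquiv.coe_coe,
      Hh.toHomCoalg.comul_au_symm]
    induction Hh.comul x using TensorProduct.induction_on with
    | zero => simp
    | add s t hs ht => simp only [map_add, add_tmul, hs, ht]
    | tmul x₁ x₂ =>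
      simp only [map_tmul, comp_apply, LinearEquiv.coe_coe, comm_tmul, assoc_tmul, mk_apply,
        lift.tmul, compl₂_apply, HomAlg.sandwich_tmul, id_coe, id_eq, HomAlg.au_symm_one,
        LinearEquiv.apply_symm_apply, Hh.one_mul', S_au_apply]
      rw [Hh.hom_assoc, LinearEquiv.apply_symm_apply]

end HomHopf

theorem adjoint_bicross_condA
    {k : Type*} [Field k] {H : Type*} [AddCommGroup H] [Module k H]
    (Hh : HomHopf k H) :
    bicrossCondA Hh.au Hh.mul Hh.comul Hh.au Hh.comul
      (adAct Hh.au Hh.mul Hh.comul Hh.S) (adCoact Hh.au Hh.mul Hh.comul Hh.S) := by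
  intro h b
  rw [Hh.comul_adAct, Hh.toHomCoalg.comul_au_symm]
  induction Hh.comul b using TensorProduct.induction_on with
  | zero => simp
  | add u v hu hv => simp only [map_add, LinearMap.add_apply, tmul_add, hu, hv]
  | tmul b₁ b₂ =>
    rw [map_tmul, Hh.tensor_sandwich_tmul_comul, ← Hh.coact_mul_act]
    simp only [LinearEquiv.coe_coe, LinearEquiv.apply_symm_apply]
    induction Hh.comul h using TensorProduct.induction_on with
    | zero => simp
    | add s t hs ht => simp only [map_add, add_tmul, hs, ht]
    | tmul x y =>
      simp only [map_tmul, comp_apply, LinearEquiv.coe_coe, tensorTensorTensorComm_tmul,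
        rTensor_tmul, lift.tmul]
      induction adCoact Hh.au Hh.mul Hh.comul Hh.S x using TensorProduct.induction_on with
      | zero => simp
      | add s t hs ht => simp only [map_add, add_tmul, hs, ht]
      | tmul p q => simp
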